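/- Let A be a finite hypergroup with quantum dimensions d_x (Perron–Frobenius eigenvalues of left multiplication) and weights w_x := N_{x x̄}^e. Define the Haar element R := (Σ_x d_x x / w_x) / (Σ_x d_x² / w_x). Then R y = y R = d_y R for every basis element y; in particular R² = R. -/

import Mathlib

/-- A finite hypergroup: a finite basis set with involution `inv`, identity `e`,
and nonnegative real structure constants `N x y z` (the coefficient of `z` in
the product `x·y`) making ℝA an associative unital algebra, with the involution
an anti-automorphism, and with `N x y e ≠ 0` iff `y = inv x`. -/
structure Hypergroup (A : Type) [Fintype A] [DecidableEq A] where
  N : A → A → A → ℝ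
  e : A
  inv : A → A
  N_nonneg : ∀ x y z, 0 ≤ N x y z
  inv_inv : ∀ x, inv (inv x) = x
  one_mul : ∀ x z, N e x z = if z = x then 1 else 0
  mul_one : ∀ x z, N x e z = if z = x then 1 else 0
  assoc : ∀ x y z w, ∑ u, N x y u * N u z w = ∑ u, N y z u * N x u w
  inv_anti : ∀ x y z, N (inv y) (inv x) (inv z) = N x y z
  dual : ∀ x y, N x y e ≠ 0 ↔ y = inv x

namespace Hypergroup

variable {A : Type} [Fintype A] [DecidableEq A]

/-- The coefficient of a basis element `z` in the product `x₁ ⋯ xₙ` of a list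
of basis elements (the empty product being the identity `e`). -/
def coeff (H : Hypergroup A) : List A → A → ℝ
  | [], z => if z = H.e then 1 else 0
  | x :: l, z => ∑ y, H.coeff l y * H.N x y z

end Hypergroup

open Finset
open scoped Matrix

/-!
Perron–Frobenius for the strictly positive matrix `∑_y R_y` of right multiplications gives a
positive vector which, since right and left multiplications commute, is a common eigenvector of
all left multiplications `L_x`. Its eigenvalues form a positive character of the fusion rules,
and pairing a positive character (a left eigenvector of `L_y`) with the positive right
eigenvector of `L_y` shows that every positive character is `d`; applied to `d ∘ inv`, this also
gives `d_x̄ = d_x`.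

Comparing the coefficient of `e` in `(x y) z̄ = x (y z̄)` gives `N_{xy}^z w_z = N_{zȳ}^x w_x`,
so `d/w` is right invariant, and by the anti-automorphism `(d/w) ∘ inv` is left invariant.
Expanding `(d/w) · ((d/w) ∘ inv)` in two ways shows the two are proportional, hence equal, so `R`
is invariant on both sides; `R² = R` because `∑_x R_x d_x = 1`.
-/

namespace Matrix

variable {n : Type*} [Fintype n] {P : Matrix n n ℝ}

theorem eq_of_vecMul_eq_smul_of_mulVec_eq_smul {M : Matrix n n ℝ} {u v : n → ℝ} {a b : ℝ}
    (hu : u ᵥ* M = a • u) (hv : M *ᵥ v = b • v) (huv : u ⬝ᵥ v ≠ 0) : a = b := by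
  have := dotProduct_mulVec u M v
  rw [hu, hv, dotProduct_smul, smul_dotProduct, smul_eq_mul, smul_eq_mul] at this
  exact (mul_right_cancel₀ huv this).symm

theorem mulVec_pos_of_pos (hP : ∀ i j, 0 < P i j) {c : n → ℝ} (hc : 0 ≤ c) (hc0 : c ≠ 0)
    (i : n) : 0 < (P *ᵥ c) i := by
  obtain ⟨j, hj⟩ : ∃ j, c j ≠ 0 := Function.ne_iff.mp hc0
  calc 0 < P i j * c j := mul_pos (hP i j) ((hc j).lt_of_ne' hj)
    _ ≤ ∑ k, P i k * c k :=
      single_le_sum (fun k _ => mul_nonneg (hP i k).le (hc k)) (mem_univ j)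

theorem mulVec_pos_of_mem_stdSimplex (hP : ∀ i j, 0 < P i j) {c : n → ℝ}
    (hc : c ∈ stdSimplex ℝ n) (i : n) : 0 < (P *ᵥ c) i :=
  mulVec_pos_of_pos hP hc.1 (by rintro rfl; simpa using hc.2) i

variable [Nonempty n]

variable (P) in
/-- The Collatz–Wielandt function: for positive `v`, the largest `t` with `t • v ≤ P *ᵥ v`.
-/
noncomputable def collatzWielandt (v : n → ℝ) : ℝ :=
  univ.inf' univ_nonempty fun i => (P *ᵥ v) i / v i

theorem collatzWielandt_mul_le {v : n → ℝ} {i : n} (hv : 0 < v i) :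
    collatzWielandt P v * v i ≤ (P *ᵥ v) i :=
  (le_div_iff₀ hv).mp (inf'_le _ (mem_univ i))

theorem lt_collatzWielandt {v : n → ℝ} (hv : ∀ i, 0 < v i) {t : ℝ}
    (h : ∀ i, t * v i < (P *ᵥ v) i) : t < collatzWielandt P v :=
  (lt_inf'_iff _).mpr fun i _ => (lt_div_iff₀ (hv i)).mpr (h i)

theorem collatzWielandt_smul {c : ℝ} (hc : c ≠ 0) (v : n → ℝ) :
    collatzWielandt P (c • v) = collatzWielandt P v := by
  simp only [collatzWielandt, mulVec_smul, Pi.smul_apply, smul_eq_mul,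
    mul_div_mul_left _ _ hc]

theorem continuousOn_collatzWielandt_mulVec (hP : ∀ i j, 0 < P i j) :
    ContinuousOn (fun c => collatzWielandt P (P *ᵥ c)) (stdSimplex ℝ n) := by
  have hcont : Continuous fun c : n → ℝ => P *ᵥ c :=
    continuous_const.matrix_mulVec continuous_id
  refine ContinuousOn.finset_inf'_apply _ fun i _ => ?_
  refine ((continuous_apply i).comp (continuous_const.matrix_mulVec hcont)).continuousOn.div
    ((continuous_apply i).comp hcont).continuousOn fun c hc =>
      (mulVec_pos_of_mem_stdSimplex hP hc i).ne'

theorem exists_pos_eigenvector_of_pos (hP : ∀ i j, 0 < P i j) :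
    ∃ (v : n → ℝ) (t : ℝ), (∀ i, 0 < v i) ∧ P *ᵥ v = t • v := by
  classical
  obtain ⟨c, hc, hmax⟩ := (isCompact_stdSimplex ℝ n).exists_isMaxOn
    ⟨_, single_mem_stdSimplex ℝ (Classical.arbitrary n)⟩
    (continuousOn_collatzWielandt_mulVec hP)
  set v := P *ᵥ c
  have hv : ∀ i, 0 < v i := mulVec_pos_of_mem_stdSimplex hP hc
  refine ⟨v, collatzWielandt P v, hv, ?_⟩
  by_contra hne
  -- Otherwise `P *ᵥ v - t • v` is a nonzero nonnegative vector, and applying `P` once more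
  -- strictly increases the Collatz–Wielandt value, beyond its maximum over the simplex.
  have hgap : 0 ≤ P *ᵥ v - collatzWielandt P v • v := fun i =>
    sub_nonneg.mpr (collatzWielandt_mul_le (hv i))
  have hPv : ∀ i, 0 < (P *ᵥ v) i := mulVec_pos_of_pos hP (fun i => (hv i).le)
    fun h => (hv (Classical.arbitrary n)).ne' (congrFun h _)
  have hlt : collatzWielandt P v < collatzWielandt P (P *ᵥ v) := by
    refine lt_collatzWielandt hPv fun i => ?_
    have := mulVec_pos_of_pos hP hgap (sub_ne_zero.mpr hne) i
    rwa [mulVec_sub, mulVec_smul, Pi.sub_apply, Pi.smul_apply, smul_eq_mul, sub_pos] at this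
  set s := ∑ i, v i
  have hs : 0 < s := sum_pos (fun i _ => hv i) univ_nonempty
  have hmem : s⁻¹ • v ∈ stdSimplex ℝ n :=
    ⟨fun i => smul_nonneg (inv_nonneg.mpr hs.le) (hv i).le, by
      simp only [Pi.smul_apply, smul_eq_mul, ← mul_sum]; exact inv_mul_cancel₀ hs.ne'⟩
  have hle : collatzWielandt P (P *ᵥ (s⁻¹ • v)) ≤ collatzWielandt P v := hmax hmem
  rw [mulVec_smul, collatzWielandt_smul (inv_ne_zero hs.ne')] at hle
  exact (hle.trans_lt hlt).false

theorem exists_eq_smul_of_mulVec_eq_smul (hP : ∀ i j, 0 < P i j) {v u : n → ℝ} {t : ℝ}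
    (hv : ∀ i, 0 < v i) (hPv : P *ᵥ v = t • v) (hPu : P *ᵥ u = t • u) :
    ∃ s : ℝ, u = s • v := by
  obtain ⟨i₀, -, hi₀⟩ := exists_mem_eq_inf' univ_nonempty fun i => u i / v i
  set s := u i₀ / v i₀
  refine ⟨s, ?_⟩
  -- `u - s • v` is a nonnegative eigenvector vanishing at `i₀`, hence zero as `P` is positive.
  have hr : 0 ≤ u - s • v := fun i => by
    have := (le_div_iff₀ (hv i)).mp (hi₀ ▸ inf'_le _ (mem_univ i))
    simpa [sub_nonneg] using this
  have hPr : P *ᵥ (u - s • v) = t • (u - s • v) := by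
    rw [mulVec_sub, mulVec_smul, hPu, hPv, smul_sub, smul_comm]
  by_contra hne
  have := mulVec_pos_of_pos hP hr (sub_ne_zero.mpr hne) i₀
  simp [hPr, s, div_mul_cancel₀ _ (hv i₀).ne'] at this

theorem exists_mulVec_eq_smul_of_commute (hP : ∀ i j, 0 < P i j) {Q : Matrix n n ℝ}
    (hPQ : Commute P Q) {v : n → ℝ} {t : ℝ} (hv : ∀ i, 0 < v i)
    (hPv : P *ᵥ v = t • v) : ∃ s : ℝ, Q *ᵥ v = s • v :=
  exists_eq_smul_of_mulVec_eq_smul hP hv hPv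
    (by rw [mulVec_mulVec, hPQ.eq, ← mulVec_mulVec, hPv, mulVec_smul])

end Matrix

namespace Hypergroup

variable {A : Type} [Fintype A] [DecidableEq A] (H : Hypergroup A)

def weight (x : A) : ℝ := H.N x (H.inv x) H.e

theorem inv_involutive : Function.Involutive H.inv := H.inv_inv

theorem N_e_right_self (x : A) : H.N x H.e x = 1 := by simp [H.mul_one]

theorem N_e_left_self (x : A) : H.N H.e x x = 1 := by simp [H.one_mul]

theorem inv_e : H.inv H.e = H.e :=
  ((H.dual H.e H.e).mp (by rw [N_e_right_self]; exact one_ne_zero)).symm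

theorem weight_pos (x : A) : 0 < H.weight x :=
  (H.N_nonneg _ _ _).lt_of_ne' ((H.dual x (H.inv x)).mpr rfl)

theorem sum_mul_N_e_right (f : A → ℝ) (x : A) :
    ∑ u, f u * H.N x u H.e = f (H.inv x) * H.weight x := by
  refine Fintype.sum_eq_single _ fun u hu => ?_
  rw [show H.N x u H.e = 0 from not_not.mp (mt (H.dual x u).mp hu), mul_zero]

theorem sum_mul_N_e_left (f : A → ℝ) (y : A) :
    ∑ u, f u * H.N u y H.e = f (H.inv y) * H.weight (H.inv y) := by
  rw [Fintype.sum_eq_single (H.inv y) fun u hu => ?_, weight, H.inv_inv]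
  rw [show H.N u y H.e = 0 from not_not.mp (mt (H.dual u y).mp ?_), mul_zero]
  rintro rfl
  exact hu (H.inv_inv u).symm

/-- Both sides are the coefficient of `e` in `(x y) z̄ = x (y z̄)`. -/
theorem N_mul_weight (x y z : A) :
    H.N x y z * H.weight z = H.N z (H.inv y) x * H.weight x := by
  have h := H.assoc x y (H.inv z) H.e
  rw [sum_mul_N_e_left, H.inv_inv, sum_mul_N_e_right] at h
  rwa [← H.inv_anti z, H.inv_inv]

/-- `z` occurs in `x (x̄ z)`, because `e` occurs in `x x̄`. -/
theorem exists_N_pos (x z : A) : ∃ y, 0 < H.N x y z := by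
  have hlt : ∑ _u : A, (0 : ℝ) < ∑ u, H.N (H.inv x) z u * H.N x u z := by
    rw [sum_const_zero, ← H.assoc]
    calc 0 < H.N x (H.inv x) H.e * H.N H.e z z := by
          rw [N_e_left_self, _root_.mul_one]; exact H.weight_pos x
      _ ≤ ∑ u, H.N x (H.inv x) u * H.N u z z :=
          single_le_sum (f := fun u => H.N x (H.inv x) u * H.N u z z)
            (fun u _ => mul_nonneg (H.N_nonneg _ _ _) (H.N_nonneg _ _ _)) (mem_univ _)
  obtain ⟨y, -, hy⟩ := exists_lt_of_sum_lt hlt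
  exact ⟨y, pos_of_mul_pos_right hy (H.N_nonneg _ _ _)⟩

/-- Column `y` of `lmul x` (of `rmul x`) holds the coefficients of `x y` (of `y x`). -/
def lmul (x : A) : Matrix A A ℝ := Matrix.of fun z y => H.N x y z

def rmul (x : A) : Matrix A A ℝ := Matrix.of fun z y => H.N y x z

theorem commute_lmul_rmul (x y : A) : Commute (H.lmul x) (H.rmul y) := by
  ext z a
  simp only [lmul, rmul, Matrix.mul_apply, Matrix.of_apply]
  rw [← sum_congr rfl fun j _ => mul_comm (H.N a y j) (H.N x j z), ← H.assoc]
  exact sum_congr rfl fun _ _ => mul_comm _ _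

theorem lmul_mul_lmul (p q : A) : H.lmul p * H.lmul q = ∑ u, H.N p q u • H.lmul u := by
  ext z a
  simp only [lmul, Matrix.mul_apply, Matrix.of_apply, Matrix.sum_apply, Matrix.smul_apply,
    smul_eq_mul]
  rw [H.assoc]
  exact sum_congr rfl fun _ _ => mul_comm _ _

theorem lmul_nonneg (x z y : A) : 0 ≤ H.lmul x z y := H.N_nonneg _ _ _

def IsCharacter (g : A → ℝ) : Prop := ∀ p q, ∑ u, g u * H.N p q u = g p * g q

variable {H}

theorem IsCharacter.vecMul_lmul {g : A → ℝ} (hg : H.IsCharacter g) (p : A) :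
    g ᵥ* H.lmul p = g p • g :=
  funext fun q => hg p q

theorem IsCharacter.comp_inv {g : A → ℝ} (hg : H.IsCharacter g) :
    H.IsCharacter (g ∘ H.inv) := by
  intro p q
  rw [← Equiv.sum_comp (H.inv_involutive.toPerm _)]
  have hN : ∀ u, H.N p q (H.inv u) = H.N (H.inv q) (H.inv p) u := fun u => by
    rw [← H.inv_anti, H.inv_inv]
  simp only [Function.comp_apply, Function.Involutive.coe_toPerm, H.inv_inv, hN]
  rw [hg, mul_comm]

theorem IsCharacter.eq_of_pos {g d : A → ℝ} (hg : H.IsCharacter g) (hg_pos : ∀ x, 0 < g x)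
    (hd : ∀ x, ∃ v : A → ℝ, (∀ a, 0 < v a) ∧
      ∀ z, ∑ y, H.N x y z * v y = d x * v z) : g = d := by
  funext y
  obtain ⟨v, hv, hLv⟩ := hd y
  refine Matrix.eq_of_vecMul_eq_smul_of_mulVec_eq_smul (hg.vecMul_lmul y) (funext hLv) ?_
  exact (sum_pos (fun a _ => mul_pos (hg_pos a) (hv a)) ⟨y, mem_univ y⟩).ne'

variable (H)

theorem exists_pos_isCharacter : ∃ g : A → ℝ, (∀ x, 0 < g x) ∧ H.IsCharacter g := by
  have hT : ∀ z a, 0 < (∑ y, H.rmul y) z a := fun z a => by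
    obtain ⟨y, hy⟩ := H.exists_N_pos a z
    simp only [Matrix.sum_apply, rmul, Matrix.of_apply]
    exact sum_pos' (fun y _ => H.N_nonneg a y z) ⟨y, mem_univ y, hy⟩
  have : Nonempty A := ⟨H.e⟩
  obtain ⟨v, t, hv, hTv⟩ := Matrix.exists_pos_eigenvector_of_pos hT
  choose c hc using fun x => Matrix.exists_mulVec_eq_smul_of_commute hT
    (Commute.sum_left _ _ _ fun y _ => (H.commute_lmul_rmul x y).symm) hv hTv
  refine ⟨c, fun x => ?_, fun p q => ?_⟩
  · have hle : v H.e ≤ c x * v x := by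
      rw [← smul_eq_mul, ← Pi.smul_apply, ← hc x]
      calc v H.e = H.lmul x x H.e * v H.e := by simp [lmul, N_e_right_self]
        _ ≤ (H.lmul x *ᵥ v) x :=
          single_le_sum (fun y _ => mul_nonneg (H.lmul_nonneg x x y) (hv y).le) (mem_univ _)
    exact pos_of_mul_pos_left ((hv H.e).trans_le hle) (hv x).le
  · have h := congrArg (· *ᵥ v) (H.lmul_mul_lmul p q)
    simp only [← Matrix.mulVec_mulVec, hc, Matrix.mulVec_smul, Matrix.sum_mulVec,
      Matrix.smul_mulVec, smul_smul, ← sum_smul] at h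
    have hv0 : v ≠ 0 := fun h0 => (hv H.e).ne' (congrFun h0 H.e)
    calc ∑ u, c u * H.N p q u = ∑ u, H.N p q u * c u := sum_congr rfl fun u _ => mul_comm _ _
      _ = c q * c p := (smul_left_injective ℝ hv0 h).symm
      _ = c p * c q := mul_comm _ _

def IsRightInvariant (d f : A → ℝ) : Prop := ∀ y z, ∑ x, f x * H.N x y z = d y * f z

def IsLeftInvariant (d f : A → ℝ) : Prop := ∀ y z, ∑ x, f x * H.N y x z = d y * f z

variable {H} {d f g : A → ℝ}

theorem IsRightInvariant.div_const (hf : H.IsRightInvariant d f) (c : ℝ) :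
    H.IsRightInvariant d fun x => f x / c := fun y z => by
  simp_rw [div_mul_eq_mul_div, ← sum_div, hf y z, mul_div_assoc]

theorem IsLeftInvariant.div_const (hf : H.IsLeftInvariant d f) (c : ℝ) :
    H.IsLeftInvariant d fun x => f x / c := fun y z => by
  simp_rw [div_mul_eq_mul_div, ← sum_div, hf y z, mul_div_assoc]

theorem IsRightInvariant.comp_inv (hf : H.IsRightInvariant d f)
    (hinv : ∀ x, d (H.inv x) = d x) : H.IsLeftInvariant d (f ∘ H.inv) := fun y z => by
  rw [← Equiv.sum_comp (H.inv_involutive.toPerm _)]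
  have hN : ∀ x, H.N y (H.inv x) z = H.N x (H.inv y) (H.inv z) := fun x => by
    rw [← H.inv_anti, H.inv_inv]
  simp only [Function.comp_apply, Function.Involutive.coe_toPerm, H.inv_inv, hN]
  rw [hf, hinv]

theorem IsRightInvariant.sum_sum_mul_N (hf : H.IsRightInvariant d f) (g : A → ℝ) (z : A) :
    ∑ x, ∑ x', f x * g x' * H.N x x' z = (∑ x', g x' * d x') * f z := by
  rw [sum_comm, sum_mul]
  refine sum_congr rfl fun x' _ => ?_
  simp_rw [mul_right_comm _ (g x'), ← sum_mul, hf x' z]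
  ring

theorem IsLeftInvariant.sum_sum_mul_N (hg : H.IsLeftInvariant d g) (f : A → ℝ) (z : A) :
    ∑ x, ∑ x', f x * g x' * H.N x x' z = (∑ x, f x * d x) * g z := by
  rw [sum_mul]
  refine sum_congr rfl fun x _ => ?_
  simp_rw [mul_assoc, ← mul_sum, hg x z]

/-- Left- and right-invariant functions are proportional: evaluate `∑ f x g x' (x x')` in two
ways. -/
theorem IsRightInvariant.eq_of_isLeftInvariant (hf : H.IsRightInvariant d f)
    (hg : H.IsLeftInvariant d g) {a : A} (ha : f a = g a) (hfa : f a ≠ 0)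
    (hfd : ∑ x, f x * d x ≠ 0) : f = g := by
  have h z := (hf.sum_sum_mul_N g z).symm.trans (hg.sum_sum_mul_N f z)
  have hsum : ∑ x, g x * d x = ∑ x, f x * d x := by
    have := h a
    rw [← ha] at this
    exact mul_right_cancel₀ hfa this
  funext z
  have := h z
  rw [hsum] at this
  exact mul_left_cancel₀ hfd this

theorem isRightInvariant_div_weight (hd : H.IsCharacter d) (hinv : ∀ x, d (H.inv x) = d x) :
    H.IsRightInvariant d fun x => d x / H.weight x := fun y z => by
  have hN : ∀ x, d x / H.weight x * H.N x y z = d x * H.N z (H.inv y) x / H.weight z := by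
    intro x
    have := H.weight_pos x
    have := H.weight_pos z
    field_simp
    rw [mul_assoc, N_mul_weight]
    ring
  dsimp only
  rw [sum_congr rfl fun x _ => hN x, ← sum_div, hd z (H.inv y), hinv]
  ring

theorem isLeftInvariant_div_weight (hd : H.IsCharacter d) (hd_pos : ∀ x, 0 < d x)
    (hinv : ∀ x, d (H.inv x) = d x) : H.IsLeftInvariant d fun x => d x / H.weight x := by
  have hR := isRightInvariant_div_weight hd hinv
  have hL := hR.comp_inv hinv
  have hpos x : 0 < d x / H.weight x := div_pos (hd_pos x) (H.weight_pos x)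
  rwa [hR.eq_of_isLeftInvariant hL (a := H.e) (by simp [inv_e]) (hpos _).ne'
    (sum_pos (fun x _ => mul_pos (hpos x) (hd_pos x)) ⟨H.e, mem_univ _⟩).ne']

end Hypergroup

open Finset in
/-- The Haar element R := (Σ_x d_x x / w_x)/(Σ_x d_x²/w_x) satisfies
R y = y R = d_y R for every basis element y, and R² = R. -/
theorem stmt_14 {A : Type} [Fintype A] [DecidableEq A] (H : Hypergroup A)
    (d : A → ℝ)
    (hd : ∀ x, ∃ v : A → ℝ, (∀ a, 0 < v a) ∧
      ∀ z, (∑ y, H.N x y z * v y) = d x * v z) :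
    let w : A → ℝ := fun x => H.N x (H.inv x) H.e
    let R : A → ℝ := fun x => (d x / w x) / (∑ a, d a ^ 2 / w a)
    ∀ y z, (∑ x, R x * H.N x y z) = d y * R z ∧
      (∑ x, R x * H.N y x z) = d y * R z ∧
      (∑ x, ∑ x', R x * R x' * H.N x x' z) = R z := by
  intro w R
  obtain ⟨c, hd_pos, hd_char⟩ := H.exists_pos_isCharacter
  obtain rfl : d = c := (hd_char.eq_of_pos hd_pos hd).symm
  have hinv : ∀ x, d (H.inv x) = d x :=
    congrFun (hd_char.comp_inv.eq_of_pos (fun _ => hd_pos _) hd)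
  have hRR := (H.isRightInvariant_div_weight hd_char hinv).div_const (∑ a, d a ^ 2 / w a)
  have hRL := (H.isLeftInvariant_div_weight hd_char hd_pos hinv).div_const (∑ a, d a ^ 2 / w a)
  have hS : 0 < ∑ a, d a ^ 2 / w a :=
    sum_pos (fun a _ => div_pos (pow_pos (hd_pos a) 2) (H.weight_pos a)) ⟨H.e, mem_univ _⟩
  have hRd : ∑ x, R x * d x = 1 := by
    simp only [R, div_mul_eq_mul_div, ← sum_div, div_eq_one_iff_eq hS.ne']
    exact sum_congr rfl fun x _ => by ring
  exact fun y z => ⟨hRR y z, hRL y z, (hRR.sum_sum_mul_N R z).trans (by rw [hRd, one_mul]; rfl)⟩
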